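/- arXiv:1703.10552 — 5 statements merged into one kernel-verified Lean document; each statement's English description precedes it below -/
import Mathlib

section
/- Let Θ : P ⇉ X be a set-valued mapping between metric spaces with closed values and let (p̄, x̄) ∈ graph Θ. Then Θ is uniformly hemiregular at (p̄, x̄) (i.e., there exist κ, r > 0 such that dist(p̄, Θ⁻¹(x)) ≤ κ·d(x, z) for all z ∈ Θ(p̄) ∩ B(x̄, r) and all x ∈ B(z, r)) if and only if there exist κ, δ > 0 such that dist(p̄, Θ⁻¹(x)) ≤ κ·dist(x, Θ(p̄)) for all x ∈ B(x̄, δ). -/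
/-!
Near `x̄`, the distance from `x` to `Θ(p̄)` is attained up to any `ε > 0` by points `z ∈ Θ(p̄)`
which themselves lie near `x̄`, so the pointwise estimate `κ·d(x, z)` of hemiregularity passes to
the infimum `κ·dist(x, Θ(p̄))`; conversely `dist(x, Θ(p̄)) ≤ d(x, z)` for every `z ∈ Θ(p̄)`.
-/

open Metric ENNReal

theorem le_mul_infEDist_of_forall_edist_lt {X : Type*} [PseudoEMetricSpace X] {x : X}
    {s : Set X} {a c ρ : ℝ≥0∞} (hc : c ≠ ∞) (hρ : infEDist x s < ρ)
    (h : ∀ z ∈ s, edist x z < ρ → a ≤ c * edist x z) :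
    a ≤ c * infEDist x s := by
  rw [mul_comm, ← ENNReal.div_le_iff_le_mul (.inr hρ.ne_top) (.inl hc)]
  refine le_of_forall_gt_imp_ge_of_dense fun b hb => ?_
  obtain ⟨z, hz, hxz⟩ := infEDist_lt_iff.mp (lt_min hb hρ)
  calc a / c ≤ edist x z := ENNReal.div_le_of_le_mul' (h z hz (hxz.trans_le (min_le_right _ _)))
    _ ≤ b := hxz.le.trans (min_le_left _ _)

theorem uniform_hemiregularity_iff_general {P X : Type*} [MetricSpace P] [MetricSpace X]
    (Θ : P → Set X)
    (pb : P) (xb : X) (hgraph : xb ∈ Θ pb) :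
    (∃ κ r : ℝ, 0 < κ ∧ 0 < r ∧ ∀ z ∈ Θ pb ∩ Metric.closedBall xb r,
        ∀ x ∈ Metric.closedBall z r,
          EMetric.infEdist pb {p | x ∈ Θ p} ≤ ENNReal.ofReal κ * edist x z) ↔
    (∃ κ δ : ℝ, 0 < κ ∧ 0 < δ ∧ ∀ x ∈ Metric.closedBall xb δ,
        EMetric.infEdist pb {p | x ∈ Θ p} ≤
          ENNReal.ofReal κ * EMetric.infEdist x (Θ pb)) := by
  constructor
  · rintro ⟨κ, r, hκ, hr, H⟩
    refine ⟨κ, r / 3, hκ, by positivity, fun x hx => ?_⟩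
    have hxxb : dist x xb ≤ r / 3 := mem_closedBall.mp hx
    have hnear : infEDist x (Θ pb) < ENNReal.ofReal (2 * r / 3) :=
      (infEDist_le_edist_of_mem hgraph).trans_lt (edist_lt_ofReal.mpr (by linarith))
    refine le_mul_infEDist_of_forall_edist_lt ofReal_ne_top hnear fun z hz hxz_e => ?_
    have hxz : dist x z < 2 * r / 3 := edist_lt_ofReal.mp hxz_e
    have hzxb : dist z xb ≤ r := by linarith [dist_triangle z x xb, dist_comm x z]
    exact H z ⟨hz, mem_closedBall.mpr hzxb⟩ x (mem_closedBall.mpr (by linarith))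
  · rintro ⟨κ, δ, hκ, hδ, H⟩
    refine ⟨κ, δ / 2, hκ, by positivity, ?_⟩
    rintro z ⟨hz, hzxb⟩ x hxz
    have hxxb : dist x xb ≤ δ := by
      linarith [dist_triangle x z xb, mem_closedBall.mp hzxb, mem_closedBall.mp hxz]
    calc EMetric.infEdist pb {p | x ∈ Θ p}
        ≤ ENNReal.ofReal κ * infEDist x (Θ pb) := H x (mem_closedBall.mpr hxxb)
      _ ≤ ENNReal.ofReal κ * edist x z := by gcongr; exact infEDist_le_edist_of_mem hz

/-- Equivalent reformulations of uniform metric hemiregularity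
(Remark 2.1 of the paper). -/
theorem uniform_hemiregularity_iff {P X : Type*} [MetricSpace P] [MetricSpace X]
    (Θ : P → Set X) (hclosed : ∀ p, IsClosed (Θ p))
    (pb : P) (xb : X) (hgraph : xb ∈ Θ pb) :
    (∃ κ r : ℝ, 0 < κ ∧ 0 < r ∧ ∀ z ∈ Θ pb ∩ Metric.closedBall xb r,
        ∀ x ∈ Metric.closedBall z r,
          EMetric.infEdist pb {p | x ∈ Θ p} ≤ ENNReal.ofReal κ * edist x z) ↔
    (∃ κ δ : ℝ, 0 < κ ∧ 0 < δ ∧ ∀ x ∈ Metric.closedBall xb δ,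
        EMetric.infEdist pb {p | x ∈ Θ p} ≤
          ENNReal.ofReal κ * EMetric.infEdist x (Θ pb)) :=
  uniform_hemiregularity_iff_general Θ pb xb hgraph
end

section
/- Let Θ : ℝ² → ℝ be defined by Θ(p₁, p₂) = p₁ + p₂² if p₁ ≥ 0 and Θ(p₁, p₂) = p₁ − p₂² if p₁ < 0. Then Θ is not metrically regular around ((0,0), 0): for every κ > 0 and r > 0 there exist p ∈ B((0,0), r) and x ∈ B(0, r) such that dist(p, Θ⁻¹(x)) > κ·dist(x, {Θ(p)}). -/
/-! At `p = (0, 2t)` we have `Θ p = 4t²`, so `p` misses the value `t²` by only `3t²`. But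
every point of the fibre `Θ⁻¹(t²)` has second coordinate at most `t` (the branch `p₁ < 0`
takes only negative values), so `p` is at distance at least `t` from it. The ratio `t / 3t²`
is unbounded as `t → 0`. -/

open Metric

noncomputable def theta (p : EuclideanSpace ℝ (Fin 2)) : ℝ :=
  if 0 ≤ p 0 then p 0 + p 1 ^ 2 else p 0 - p 1 ^ 2

lemma theta_of_nonneg {a : ℝ} (ha : 0 ≤ a) (b : ℝ) : theta !₂[a, b] = a + b ^ 2 := by
  simp [theta, ha]

lemma apply_one_le_of_theta_eq_sq {q : EuclideanSpace ℝ (Fin 2)} {t : ℝ} (ht : 0 ≤ t)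
    (hq : theta q = t ^ 2) : q 1 ≤ t := by
  unfold theta at hq
  split_ifs at hq with h
  · exact (abs_le_of_sq_le_sq' (by linarith) ht).2
  · nlinarith

lemma sub_le_infDist_theta_fiber (p : EuclideanSpace ℝ (Fin 2)) {t : ℝ} (ht : 0 ≤ t) :
    p 1 - t ≤ infDist p {q | theta q = t ^ 2} := by
  have hne : {q | theta q = t ^ 2}.Nonempty :=
    ⟨!₂[t ^ 2, 0], by simp [theta_of_nonneg, sq_nonneg]⟩
  refine (le_infDist hne).2 fun q hq => ?_
  calc p 1 - t ≤ p 1 - q 1 := by linarith [apply_one_le_of_theta_eq_sq ht hq]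
    _ ≤ dist (p 1) (q 1) := le_abs_self _
    _ ≤ dist p q := PiLp.dist_apply_le p q 1

/-- The mapping Θ(p₁,p₂) = p₁ + p₂² (p₁ ≥ 0), p₁ − p₂² (p₁ < 0) is not
metrically regular around ((0,0),0). -/
theorem not_metrically_regular (Θ : EuclideanSpace ℝ (Fin 2) → ℝ)
    (hΘ : ∀ p, Θ p = if 0 ≤ p 0 then p 0 + (p 1) ^ 2 else p 0 - (p 1) ^ 2) :
    ∀ κ r : ℝ, 0 < κ → 0 < r →
      ∃ p ∈ Metric.closedBall (0 : EuclideanSpace ℝ (Fin 2)) r,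
        ∃ x ∈ Metric.closedBall (0 : ℝ) r,
          κ * dist x (Θ p) < Metric.infDist p {q | Θ q = x} := by
  obtain rfl : Θ = theta := funext hΘ
  intro κ r hκ hr
  set t := min (min (r / 2) 1) (1 / (4 * κ))
  have ht : 0 < t := by positivity
  have htr : t ≤ r / 2 := (min_le_left _ _).trans (min_le_left _ _)
  have ht1 : t ≤ 1 := (min_le_left _ _).trans (min_le_right _ _)
  have htκ : 4 * κ * t ≤ 1 := by
    have := min_le_right (min (r / 2) 1) (1 / (4 * κ))
    rwa [le_div_iff₀' (by positivity)] at this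
  refine ⟨!₂[0, 2 * t], ?_, t ^ 2, ?_, ?_⟩
  · have hnorm : ‖!₂[0, 2 * t]‖ = 2 * t := by
      simp [EuclideanSpace.norm_eq, Fin.sum_univ_two, Real.sqrt_sq_eq_abs, abs_of_pos ht]
    rw [mem_closedBall_zero_iff, hnorm]
    linarith
  · rw [mem_closedBall_zero_iff, Real.norm_eq_abs, abs_of_pos (by positivity)]
    nlinarith
  · calc κ * dist (t ^ 2) (theta !₂[0, 2 * t]) = 3 * κ * t * t := by
          rw [theta_of_nonneg le_rfl, Real.dist_eq, abs_of_nonpos (by nlinarith)]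
          ring
      _ < 2 * t - t := by nlinarith
      _ ≤ _ := sub_le_infDist_theta_fiber !₂[0, 2 * t] ht.le
end

section
/- Let x̄ ∈ R be a local solution of the problem of minimizing φ over the closed set R ⊆ X, and let 𝓡 : P ⇉ X be a parameterization of R at (p̄, x̄), i.e. 𝓡(p̄) = R. If (i) 𝓡 is uniformly hemiregular at (p̄, x̄) with modulus κ₀ and (ii) the problem is calm at x̄ with respect to 𝓡 with modulus ζ₀, then for every l > κ₀·ζ₀ the penalty function x ↦ φ(x) + l·dist(x, R) attains a local minimum at x̄. -/
/-!
Near `xb`, hemiregularity supplies for each `x` a parameter `p` with `x ∈ 𝓡 p` and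
`dist p pb ≲ κ · dist(x, R)`; calmness at that `p` then gives
`φ x ≥ φ xb - ζ κ · dist(x, R)`, and `ζ κ < l` once `κ > κ₀`, `ζ > ζ₀` are close enough.
Points of `R` itself are covered by the parameter `p = pb`.
-/

open Filter Topology Metric

theorem exists_gt_gt_mul_lt {a b l : ℝ} (h : a * b < l) :
    ∃ a' > a, ∃ b' > b, a' * b' < l := by
  have hmul : ∀ᶠ q : ℝ × ℝ in 𝓝[>] a ×ˢ 𝓝[>] b, q.1 * q.2 < l :=
    ((continuous_mul.tendsto (a, b)).mono_left <| by
      rw [nhds_prod_eq]; exact prod_mono nhdsWithin_le_nhds nhdsWithin_le_nhds).eventually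
      (gt_mem_nhds h)
  obtain ⟨⟨a', b'⟩, hab, ha, hb⟩ :=
    (hmul.and (prod_mem_prod self_mem_nhdsWithin self_mem_nhdsWithin)).exists
  exact ⟨a', ha, b', hb, hab⟩

section

variable {P X : Type*} [PseudoMetricSpace P] [PseudoMetricSpace X]

theorem exists_mem_dist_lt_of_infEDist_le {S : Set P} {p₀ : P} {κ m d : ℝ} (hκ : 0 ≤ κ)
    (hm : κ < m) (hd : 0 < d) (h : infEDist p₀ S ≤ ENNReal.ofReal κ * ENNReal.ofReal d) :
    ∃ p ∈ S, dist p p₀ < m * d := by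
  have hlt : infEDist p₀ S < ENNReal.ofReal (m * d) := by
    rw [← ENNReal.ofReal_mul hκ] at h
    exact h.trans_lt <| (ENNReal.ofReal_lt_ofReal_iff (mul_pos (hκ.trans_lt hm) hd)).2 <|
      mul_lt_mul_of_pos_right hm hd
  obtain ⟨p, hpS, hp⟩ := infEDist_lt_iff.1 hlt
  exact ⟨p, hpS, by rw [dist_comm]; exact edist_lt_ofReal.1 hp⟩

theorem exists_param_dist_le_mul_infDist {𝓡 : P → Set X} {p₀ : P} {R : Set X}
    (hpar : 𝓡 p₀ = R) (hRcl : IsClosed R) (hRne : R.Nonempty) {x : X} {κ m : ℝ}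
    (hκ : 0 ≤ κ) (hm : κ < m)
    (h : infEDist p₀ {p | x ∈ 𝓡 p} ≤ ENNReal.ofReal κ * infEDist x R) :
    ∃ p, x ∈ 𝓡 p ∧ dist p p₀ ≤ m * infDist x R := by
  by_cases hxR : x ∈ R
  · exact ⟨p₀, hpar ▸ hxR, by simp [infDist_zero_of_mem hxR]⟩
  · have hd : 0 < infDist x R := (hRcl.notMem_iff_infDist_pos hRne).1 hxR
    rw [← ENNReal.ofReal_toReal (infEDist_ne_top hRne)] at h
    obtain ⟨p, hxp, hp⟩ := exists_mem_dist_lt_of_infEDist_le hκ hm hd h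
    exact ⟨p, hxp, hp.le⟩

end

theorem exact_penalization_general {P X : Type*} [MetricSpace P] [MetricSpace X]
    (φ : X → EReal) (R : Set X) (hRcl : IsClosed R)
    (xb : X) (hxbR : xb ∈ R)
    (𝓡 : P → Set X) (pb : P) (hpar : 𝓡 pb = R)
    (κ₀ ζ₀ : ℝ) (hκ₀nn : 0 ≤ κ₀) (hζ₀nn : 0 ≤ ζ₀)
    (hhemi : ∀ κ : ℝ, κ₀ < κ → ∃ δ : ℝ, 0 < δ ∧ ∀ x ∈ Metric.closedBall xb δ,
        EMetric.infEdist pb {p | x ∈ 𝓡 p} ≤ ENNReal.ofReal κ * EMetric.infEdist x R)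
    (hcalm : ∀ ζ : ℝ, ζ₀ < ζ → ∃ r : ℝ, 0 < r ∧ ∀ p ∈ Metric.closedBall pb r,
        ∀ x ∈ 𝓡 p ∩ Metric.closedBall xb r,
          φ xb - ((ζ * dist p pb : ℝ) : EReal) ≤ φ x) :
    ∀ l : ℝ, κ₀ * ζ₀ < l → ∃ ε : ℝ, 0 < ε ∧ ∀ x ∈ Metric.closedBall xb ε,
      φ xb ≤ φ x + ((l * Metric.infDist x R : ℝ) : EReal) := by
  intro l hl
  obtain ⟨κ, hκ, ζ, hζ, hκζ⟩ := exists_gt_gt_mul_lt hl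
  have hζpos : 0 < ζ := hζ₀nn.trans_lt hζ
  have hm : κ < l / ζ := (lt_div_iff₀ hζpos).2 hκζ
  have hmpos : 0 < l / ζ := (hκ₀nn.trans_lt hκ).trans hm
  obtain ⟨δ, hδ, hH⟩ := hhemi κ hκ
  obtain ⟨r, hr, hC⟩ := hcalm ζ hζ
  refine ⟨min δ (min r (r / (l / ζ))), by positivity, fun x hx => ?_⟩
  simp only [mem_closedBall, le_min_iff] at hx
  obtain ⟨p, hxp, hp⟩ := exists_param_dist_le_mul_infDist hpar hRcl ⟨xb, hxbR⟩
    (hκ₀nn.trans hκ.le) hm (hH x (mem_closedBall.2 hx.1))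
  have hdist : infDist x R ≤ dist x xb := infDist_le_dist_of_mem hxbR
  have hpr : dist p pb ≤ r := calc
    dist p pb ≤ l / ζ * infDist x R := hp
    _ ≤ l / ζ * (r / (l / ζ)) := by gcongr; exact hdist.trans hx.2.2
    _ = r := mul_div_cancel₀ r hmpos.ne'
  have hpenalty : ζ * dist p pb ≤ l * infDist x R := calc
    ζ * dist p pb ≤ ζ * (l / ζ * infDist x R) := by gcongr
    _ = l * infDist x R := by field_simp
  have hφ := hC p (mem_closedBall.2 hpr) x ⟨hxp, mem_closedBall.2 hx.2.1⟩
  rw [EReal.sub_le_iff_le_add (.inl (EReal.coe_ne_bot _)) (.inl (EReal.coe_ne_top _))] at hφ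
  exact hφ.trans (add_le_add_right (EReal.coe_le_coe_iff.2 hpenalty) _)

/-- Theorem 3.1 (exact penalization): if the parameterization 𝓡 of the feasible
region R is uniformly hemiregular at (pb, xb) with modulus κ₀ and the problem is
calm at xb with modulus ζ₀, then the penalty function φ + l·dist(·,R) is exact at
xb for every l > κ₀·ζ₀. -/
theorem exact_penalization {P X : Type*} [MetricSpace P] [MetricSpace X]
    (φ : X → EReal) (R : Set X) (hRne : R.Nonempty) (hRcl : IsClosed R)
    (xb : X) (hxbR : xb ∈ R) (hfin : ∃ a : ℝ, φ xb = (a : EReal))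
    (hlocmin : ∃ ε : ℝ, 0 < ε ∧ ∀ x ∈ R ∩ Metric.closedBall xb ε, φ xb ≤ φ x)
    (𝓡 : P → Set X) (pb : P) (hpar : 𝓡 pb = R) (hclval : ∀ p, IsClosed (𝓡 p))
    (κ₀ ζ₀ : ℝ) (hκ₀nn : 0 ≤ κ₀) (hζ₀nn : 0 ≤ ζ₀)
    (hhemi : ∀ κ : ℝ, κ₀ < κ → ∃ δ : ℝ, 0 < δ ∧ ∀ x ∈ Metric.closedBall xb δ,
        EMetric.infEdist pb {p | x ∈ 𝓡 p} ≤ ENNReal.ofReal κ * EMetric.infEdist x R)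
    (hcalm : ∀ ζ : ℝ, ζ₀ < ζ → ∃ r : ℝ, 0 < r ∧ ∀ p ∈ Metric.closedBall pb r,
        ∀ x ∈ 𝓡 p ∩ Metric.closedBall xb r,
          φ xb - ((ζ * dist p pb : ℝ) : EReal) ≤ φ x) :
    ∀ l : ℝ, κ₀ * ζ₀ < l → ∃ ε : ℝ, 0 < ε ∧ ∀ x ∈ Metric.closedBall xb ε,
      φ xb ≤ φ x + ((l * Metric.infDist x R : ℝ) : EReal) :=
  exact_penalization_general φ R hRcl xb hxbR 𝓡 pb hpar κ₀ ζ₀ hκ₀nn hζ₀nn hhemi hcalm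
end

section
/- Let 𝓡 : P ⇉ X be a set-valued mapping between metric spaces, p̄ ∈ P, and x̄ ∈ 𝓡(p̄) a local minimizer of φ on 𝓡(p̄). Suppose (i) 𝓡 is calm at (p̄, x̄): there exist ζ, r > 0 with 𝓡(p) ∩ B(x̄, r) ⊆ B(𝓡(p̄), ζ·d(p, p̄)) for all p ∈ B(p̄, r); and (ii) there exists l > 0 such that x ↦ φ(x) + l·dist(x, 𝓡(p̄)) attains a local minimum at x̄. Then the problem of minimizing φ over 𝓡(p̄) is calm at x̄ with respect to 𝓡: there exist η, ζ' > 0 such that φ(x) ≥ φ(x̄) − ζ'·d(p, p̄) for all p ∈ B(p̄, η) and x ∈ B(x̄, η) ∩ 𝓡(p). -/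
/-! Along 𝓡(p), the exact penalty gives φ(x̄) ≤ φ(x) + l·dist(x, 𝓡(p̄)) and calmness of 𝓡 bounds
dist(x, 𝓡(p̄)) by ζ·d(p, p̄), so the problem is calm with modulus l·ζ on the smaller of the two
neighbourhoods. -/

theorem EReal.sub_coe_le_of_le_add_coe {a b : EReal} {c d : ℝ} (h : a ≤ b + c) (hcd : c ≤ d) :
    a - d ≤ b :=
  (EReal.sub_le_iff_le_add (.inl (EReal.coe_ne_bot d)) (.inl (EReal.coe_ne_top d))).2 <|
    h.trans (add_le_add_right (EReal.coe_le_coe_iff.2 hcd) b)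

theorem problem_calmness_sufficient_general {P X : Type*} [MetricSpace P] [MetricSpace X]
    (φ : X → EReal) (𝓡 : P → Set X)
    (pb : P) (xb : X)
    (hcalmR : ∃ ζ r : ℝ, 0 < ζ ∧ 0 < r ∧ ∀ p ∈ Metric.closedBall pb r,
        ∀ x ∈ 𝓡 p ∩ Metric.closedBall xb r,
          Metric.infDist x (𝓡 pb) ≤ ζ * dist p pb)
    (hexact : ∃ l : ℝ, 0 < l ∧ ∃ ε : ℝ, 0 < ε ∧ ∀ x ∈ Metric.closedBall xb ε,
        φ xb ≤ φ x + ((l * Metric.infDist x (𝓡 pb) : ℝ) : EReal)) :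
    ∃ η ζ' : ℝ, 0 < η ∧ 0 < ζ' ∧ ∀ p ∈ Metric.closedBall pb η,
      ∀ x ∈ 𝓡 p ∩ Metric.closedBall xb η,
        φ xb - ((ζ' * dist p pb : ℝ) : EReal) ≤ φ x := by
  obtain ⟨l, hl, ε, hε, hpenalty⟩ := hexact
  obtain ⟨ζ, r, hζ, hr, hcalm⟩ := hcalmR
  refine ⟨min r ε, l * ζ, lt_min hr hε, mul_pos hl hζ, fun p hp x ⟨hxp, hx⟩ ↦ ?_⟩
  have hp_r : p ∈ Metric.closedBall pb r := Metric.closedBall_subset_closedBall (min_le_left r ε) hp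
  have hx_r : x ∈ Metric.closedBall xb r := Metric.closedBall_subset_closedBall (min_le_left r ε) hx
  have hx_ε : x ∈ Metric.closedBall xb ε :=
    Metric.closedBall_subset_closedBall (min_le_right r ε) hx
  have hdist : Metric.infDist x (𝓡 pb) ≤ ζ * dist p pb := hcalm p hp_r x ⟨hxp, hx_r⟩
  refine EReal.sub_coe_le_of_le_add_coe (hpenalty x hx_ε) ?_
  rw [mul_assoc]
  exact mul_le_mul_of_nonneg_left hdist hl.le

/-- Proposition 3.1: calmness of the set-valued mapping 𝓡 at (pb,xb) together
with the exactness of some penalty function at xb implies problem calmness at xb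
with respect to 𝓡. -/
theorem problem_calmness_sufficient {P X : Type*} [MetricSpace P] [MetricSpace X]
    (φ : X → EReal) (𝓡 : P → Set X) (hclval : ∀ p, IsClosed (𝓡 p))
    (pb : P) (xb : X) (hxb : xb ∈ 𝓡 pb) (hfin : ∃ a : ℝ, φ xb = (a : EReal))
    (hlocmin : ∃ ε : ℝ, 0 < ε ∧ ∀ x ∈ 𝓡 pb ∩ Metric.closedBall xb ε, φ xb ≤ φ x)
    (hcalmR : ∃ ζ r : ℝ, 0 < ζ ∧ 0 < r ∧ ∀ p ∈ Metric.closedBall pb r,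
        ∀ x ∈ 𝓡 p ∩ Metric.closedBall xb r,
          Metric.infDist x (𝓡 pb) ≤ ζ * dist p pb)
    (hexact : ∃ l : ℝ, 0 < l ∧ ∃ ε : ℝ, 0 < ε ∧ ∀ x ∈ Metric.closedBall xb ε,
        φ xb ≤ φ x + ((l * Metric.infDist x (𝓡 pb) : ℝ) : EReal)) :
    ∃ η ζ' : ℝ, 0 < η ∧ 0 < ζ' ∧ ∀ p ∈ Metric.closedBall pb η,
      ∀ x ∈ 𝓡 p ∩ Metric.closedBall xb η,
        φ xb - ((ζ' * dist p pb : ℝ) : EReal) ≤ φ x :=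
  problem_calmness_sufficient_general φ 𝓡 pb xb hcalmR hexact
end

section
/- Let F : P × X ⇉ Y be a set-valued mapping with closed values between metric spaces, ω ∈ Y, p̄ ∈ P, x̄ ∈ X with ω ∈ F(p̄, x̄), and define the solution mapping 𝓡(p) = {x : ω ∈ F(p, x)} and the displacement ν_F(p, x) = dist(ω, F(p, x)). Suppose: (i) P is a complete metric space; (ii) there is δ₀ > 0 such that for every x ∈ B(x̄, δ₀), the map p ↦ F(p, x) is Hausdorff upper semicontinuous on B(p̄, δ₀); (iii) F(p̄, ·) : X ⇉ Y is uniformly Lipschitz lower semicontinuous at (x̄, ω) with modulus κ₀; (iv) the strict outer slope of ν_F with respect to p at p̄ is positive, say equal to α₀ > 0. Then 𝓡 is uniformly hemiregular at (p̄, x̄) with modulus at most κ₀/α₀. -/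
/-!
Fix `x` near `xb` and apply Ekeland's variational principle, with a parameter `lam < α₀`, to
`p ↦ ν(p, x) = infEDist ω (F p x)` on a closed ball around `pb`; this function is lower
semicontinuous because `F (·) x` is Hausdorff upper semicontinuous. The Ekeland point `p` lies
within `ν(pb, x) / lam` of `pb` and has strong slope at most `lam`, so the strict outer slope
condition forces `ν(p, x) = 0`, i.e. `ω ∈ F p x`. Lipschitz lower semicontinuity gives
`ν(pb, x) ≤ κ' * lam * dist(x, 𝓡 pb)` with `κ' * lam > κ₀`, hence
`dist(pb, 𝓡⁻¹ x) ≤ κ' * dist(x, 𝓡 pb)`.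
-/

open Filter Classical

/-- The (strong) slope of an extended-real-valued function `g` at a point `p`:
`0` if `p` is a local minimizer of `g`, and `limsup_{q→p} (g(p)−g(q))/d(q,p)`
otherwise. -/
noncomputable def strongSlope {P : Type*} [MetricSpace P] (g : P → ENNReal) (p : P) :
    ENNReal :=
  if ∀ᶠ q in nhds p, g p ≤ g q then 0
  else Filter.limsup (fun q => (g p - g q) / edist q p) (nhdsWithin p {p}ᶜ)

/-- The strict outer slope with respect to `p` at `(pb, xb)` of the displacement
function `ν`. -/
noncomputable def strictOuterSlope {P X : Type*} [MetricSpace P] [MetricSpace X]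
    (ν : P → X → ENNReal) (pb : P) (xb : X) : ENNReal :=
  ⨆ (ε : ℝ) (_ : 0 < ε),
    ⨅ (px : P × X) (_ : px.1 ∈ Metric.closedBall pb ε ∧ px.2 ∈ Metric.closedBall xb ε ∧
        ν pb xb < ν px.1 px.2 ∧ ν px.1 px.2 < ν pb xb + ENNReal.ofReal ε),
      strongSlope (fun p => ν p px.2) px.1

open Topology ENNReal Metric

section Ekeland

variable {α : Type*} [EMetricSpace α] {f : α → ℝ≥0∞} {lam : ℝ≥0∞} {x y z : α}

def ekelandSet (f : α → ℝ≥0∞) (lam : ℝ≥0∞) (x : α) : Set α :=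
  {z | f z + lam * edist z x ≤ f x}

theorem self_mem_ekelandSet (x : α) : x ∈ ekelandSet f lam x := by
  simp [ekelandSet]

theorem le_of_mem_ekelandSet (hz : z ∈ ekelandSet f lam x) : f z ≤ f x :=
  le_self_add.trans hz

theorem ekelandSet_subset (hy : y ∈ ekelandSet f lam x) :
    ekelandSet f lam y ⊆ ekelandSet f lam x := fun z hz =>
  calc f z + lam * edist z x ≤ f z + lam * edist z y + lam * edist y x := by
        rw [add_assoc, ← mul_add]; gcongr; exact edist_triangle _ _ _
    _ ≤ f y + lam * edist y x := by gcongr; exact hz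
    _ ≤ f x := hy

theorem isClosed_ekelandSet (hf : LowerSemicontinuous f) (hlam : lam ≠ ⊤) (x : α) :
    IsClosed (ekelandSet f lam x) :=
  (hf.add ((ENNReal.continuous_const_mul hlam).comp
    (continuous_id.edist continuous_const)).lowerSemicontinuous).isClosed_preimage (f x)

theorem exists_mem_ekelandSet_le_iInf_add (x : α) {ε : ℝ≥0∞} (hε : ε ≠ 0) :
    ∃ y ∈ ekelandSet f lam x, f y ≤ (⨅ z ∈ ekelandSet f lam x, f z) + ε := by
  by_cases htop : (⨅ z ∈ ekelandSet f lam x, f z) = ⊤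
  · exact ⟨x, self_mem_ekelandSet x, by simp [htop]⟩
  obtain ⟨y, hy⟩ := iInf_lt_iff.1 (ENNReal.lt_add_right htop hε)
  obtain ⟨hy, hlt⟩ := iInf_lt_iff.1 hy
  exact ⟨y, hy, hlt.le⟩

theorem edist_le_of_mem_ekelandSet_of_le_iInf_add (hlam0 : lam ≠ 0) (hlam : lam ≠ ⊤)
    (hy : y ∈ ekelandSet f lam x) (hfy : f y ≠ ⊤) {ε : ℝ≥0∞}
    (hε : f y ≤ (⨅ w ∈ ekelandSet f lam x, f w) + ε) (hz : z ∈ ekelandSet f lam y) :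
    edist z y ≤ ε / lam := by
  have hfz : f z ≠ ⊤ := ne_top_of_le_ne_top hfy (le_of_mem_ekelandSet hz)
  have key : f z + lam * edist z y ≤ f z + ε :=
    calc f z + lam * edist z y ≤ f y := hz
      _ ≤ (⨅ w ∈ ekelandSet f lam x, f w) + ε := hε
      _ ≤ f z + ε := by gcongr; exact iInf₂_le z (ekelandSet_subset hy hz)
  rw [ENNReal.le_div_iff_mul_le (Or.inl hlam0) (Or.inl hlam), mul_comm]
  exact (ENNReal.add_le_add_iff_left hfz).1 key

theorem LowerSemicontinuous.exists_ekeland [CompleteSpace α] (hf : LowerSemicontinuous f)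
    {x₀ : α} (hx₀ : f x₀ ≠ ⊤) (hlam0 : lam ≠ 0) (hlam : lam ≠ ⊤) :
    ∃ x ∈ ekelandSet f lam x₀, ∀ z ∈ ekelandSet f lam x, z = x := by
  choose next hnext_mem hnext_le using fun x (n : ℕ) =>
    exists_mem_ekelandSet_le_iInf_add (f := f) (lam := lam) x (ε := 2⁻¹ ^ n) (by simp)
  set u : ℕ → α := fun n => Nat.rec x₀ (fun n x => next x n) n
  have hu : ∀ n, u (n + 1) ∈ ekelandSet f lam (u n) := fun n => hnext_mem _ _
  have hu_anti : Antitone fun n => ekelandSet f lam (u n) :=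
    antitone_nat_of_succ_le fun n => ekelandSet_subset (hu n)
  have hu_mem : ∀ {m n}, n ≤ m → u m ∈ ekelandSet f lam (u n) := fun h =>
    hu_anti h (self_mem_ekelandSet _)
  have hfu : ∀ n, f (u n) ≠ ⊤ := fun n =>
    ne_top_of_le_ne_top hx₀ (le_of_mem_ekelandSet (hu_mem n.zero_le))
  -- `u (n + 1)` nearly minimises `f` on `ekelandSet f lam (u n)`, which makes the nested closed
  -- sets `ekelandSet f lam (u (n + 1))` shrink geometrically.
  have hsmall : ∀ n, ∀ z ∈ ekelandSet f lam (u (n + 1)),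
      edist z (u (n + 1)) ≤ lam⁻¹ * 2⁻¹ ^ n := by
    intro n z hz
    rw [mul_comm, ← div_eq_mul_inv]
    exact edist_le_of_mem_ekelandSet_of_le_iInf_add hlam0 hlam (hu n) (hfu (n + 1))
      (hnext_le _ _) hz
  have hcauchy : CauchySeq fun n => u (n + 1) :=
    cauchySeq_of_edist_le_geometric 2⁻¹ lam⁻¹ (by norm_num) (ENNReal.inv_ne_top.2 hlam0)
      fun n => by rw [edist_comm]; exact hsmall n _ (hu (n + 1))
  obtain ⟨x, hx⟩ := cauchySeq_tendsto_of_complete hcauchy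
  have hx_mem : ∀ n, x ∈ ekelandSet f lam (u n) := fun n =>
    (isClosed_ekelandSet hf hlam _).mem_of_tendsto hx
      (eventually_atTop.2 ⟨n, fun m hm => hu_mem (m := m + 1) (by omega)⟩)
  refine ⟨x, hx_mem 0, fun z hz => tendsto_nhds_unique ?_ hx⟩
  have hgeom : Tendsto (fun n : ℕ => lam⁻¹ * 2⁻¹ ^ n) atTop (𝓝 0) := by
    simpa using ENNReal.Tendsto.const_mul
      (ENNReal.tendsto_pow_atTop_nhds_zero_of_lt_one (by norm_num))
      (Or.inr (inv_ne_top.2 hlam0))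
  refine tendsto_iff_edist_tendsto_0.2 (tendsto_of_tendsto_of_tendsto_of_le_of_le
    tendsto_const_nhds hgeom (fun _ => zero_le) fun n => ?_)
  rw [edist_comm]
  exact hsmall n z (ekelandSet_subset (hx_mem (n + 1)) hz)

theorem LowerSemicontinuousOn.exists_ekeland {s : Set α} (hs : IsComplete s)
    (hf : LowerSemicontinuousOn f s) {x₀ : α} (hx₀s : x₀ ∈ s) (hx₀ : f x₀ ≠ ⊤)
    (hlam0 : lam ≠ 0) (hlam : lam ≠ ⊤) :
    ∃ x ∈ s ∩ ekelandSet f lam x₀, ∀ z ∈ s ∩ ekelandSet f lam x, z = x := by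
  have := hs.completeSpace_coe
  obtain ⟨⟨x, hxs⟩, hx, hmin⟩ :=
    (lowerSemicontinuous_restrict_iff.2 hf).exists_ekeland (x₀ := ⟨x₀, hx₀s⟩) hx₀ hlam0 hlam
  exact ⟨x, ⟨hxs, hx⟩, fun z ⟨hzs, hz⟩ => congrArg Subtype.val (hmin ⟨z, hzs⟩ hz)⟩

end Ekeland

section Slope

variable {P : Type*} [MetricSpace P] {g : P → ℝ≥0∞} {p : P} {lam : ℝ≥0∞}

theorem strongSlope_le_of_eventually_le (h : ∀ᶠ q in 𝓝 p, g p ≤ g q + lam * edist q p) :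
    strongSlope g p ≤ lam := by
  unfold strongSlope
  split_ifs
  · exact zero_le
  · refine limsup_le_of_le (by isBoundedDefault) ?_
    filter_upwards [eventually_nhdsWithin_of_eventually_nhds h] with q hq
    exact ENNReal.div_le_of_le_mul (tsub_le_iff_left.2 hq)

theorem strongSlope_le_of_forall_mem_ekelandSet_eq {s : Set P} (hs : s ∈ 𝓝 p)
    (hp : ∀ z ∈ s ∩ ekelandSet g lam p, z = p) : strongSlope g p ≤ lam := by
  refine strongSlope_le_of_eventually_le ?_
  filter_upwards [hs] with q hq
  by_cases hle : q ∈ ekelandSet g lam p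
  · rw [hp q ⟨hq, hle⟩]
    exact le_self_add
  · exact (not_le.1 hle).le

theorem exists_eq_zero_edist_le_of_lt_strongSlope {s : Set P} (hs : IsComplete s)
    (hg : LowerSemicontinuousOn g s) (hp : p ∈ s) (hgp : g p ≠ ⊤) (hlam0 : lam ≠ 0)
    (hlam : lam ≠ ⊤) (hnhds : ∀ z, edist z p ≤ g p / lam → s ∈ 𝓝 z)
    (hslope : ∀ z, edist z p ≤ g p / lam → 0 < g z → g z ≤ g p → lam < strongSlope g z) :
    ∃ z, g z = 0 ∧ edist z p ≤ g p / lam := by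
  obtain ⟨z, ⟨-, hz⟩, hmin⟩ := hg.exists_ekeland hs hp hgp hlam0 hlam
  have hdist : edist z p ≤ g p / lam := by
    rw [ENNReal.le_div_iff_mul_le (Or.inl hlam0) (Or.inl hlam), mul_comm]
    exact le_add_self.trans hz
  refine ⟨z, not_not.1 fun hz0 => ?_, hdist⟩
  exact (strongSlope_le_of_forall_mem_ekelandSet_eq (hnhds z hdist) hmin).not_gt
    (hslope z hdist (pos_iff_ne_zero.2 hz0) (le_of_mem_ekelandSet hz))

theorem exists_pos_lt_strongSlope_of_lt_strictOuterSlope {X : Type*} [MetricSpace X]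
    {ν : P → X → ℝ≥0∞} {pb : P} {xb : X} {β : ℝ≥0∞} (h : β < strictOuterSlope ν pb xb) :
    ∃ ε > 0, ∀ p ∈ closedBall pb ε, ∀ x ∈ closedBall xb ε, ν pb xb < ν p x →
      ν p x < ν pb xb + ENNReal.ofReal ε → β < strongSlope (fun q => ν q x) p := by
  obtain ⟨ε, hε⟩ := lt_iSup_iff.1 h
  obtain ⟨hε0, hinf⟩ := lt_iSup_iff.1 hε
  exact ⟨ε, hε0, fun p hp x hx h₁ h₂ => hinf.trans_le (iInf₂_le (p, x) ⟨hp, hx, h₁, h₂⟩)⟩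

end Slope

section HausdorffSemicontinuity

variable {P Y : Type*} [MetricSpace P] [MetricSpace Y]

def HausdorffUpperSemicontinuousAt (G : P → Set Y) (p : P) : Prop :=
  ∀ ε : ℝ, 0 < ε → ∃ δ : ℝ, 0 < δ ∧
    ∀ q ∈ closedBall p δ, ∀ y ∈ G q, infEDist y (G p) ≤ ENNReal.ofReal ε

theorem infEDist_le_infEDist_add_of_forall_infEDist_le {s t : Set Y} {ω : Y} {ε : ℝ≥0∞}
    (h : ∀ y ∈ t, infEDist y s ≤ ε) : infEDist ω s ≤ infEDist ω t + ε := by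
  rw [← tsub_le_iff_right]
  refine le_infEDist.2 fun y hy => tsub_le_iff_right.2 ?_
  exact infEDist_le_edist_add_infEDist.trans (by gcongr; exact h y hy)

theorem lowerSemicontinuousAt_of_forall_eventually_le_add {g : P → ℝ≥0∞} {p : P}
    (h : ∀ ε : ℝ, 0 < ε → ∀ᶠ q in 𝓝 p, g p ≤ g q + ENNReal.ofReal ε) :
    LowerSemicontinuousAt g p := by
  intro y hy
  obtain ⟨ε, hε, hyε⟩ := ENNReal.lt_iff_exists_add_pos_lt.1 hy
  filter_upwards [h ε hε] with q hq
  rw [← ENNReal.ofReal_coe_nnreal] at hyε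
  exact (ENNReal.add_lt_add_iff_right ofReal_ne_top).1 (hyε.trans_le hq)

theorem HausdorffUpperSemicontinuousAt.lowerSemicontinuousAt_infEDist {G : P → Set Y}
    {p : P} (hG : HausdorffUpperSemicontinuousAt G p) (ω : Y) :
    LowerSemicontinuousAt (fun q => infEDist ω (G q)) p :=
  lowerSemicontinuousAt_of_forall_eventually_le_add fun ε hε => by
    obtain ⟨δ, hδ, hq⟩ := hG ε hε
    filter_upwards [closedBall_mem_nhds p hδ] with q hq'
    exact infEDist_le_infEDist_add_of_forall_infEDist_le (hq q hq')

end HausdorffSemicontinuity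

theorem infEDist_setOf_mem_le_div_of_lt_strongSlope {P X Y : Type*} [MetricSpace P]
    [CompleteSpace P] [MetricSpace Y] {F : P → X → Set Y} {x : X}
    (hclosed : ∀ p, IsClosed (F p x)) {ω : Y} {pb : P} {R lam : ℝ} (hlam : 0 < lam)
    (husc : ∀ p ∈ closedBall pb R, HausdorffUpperSemicontinuousAt (F · x) p)
    (hR : infEDist ω (F pb x) < ENNReal.ofReal (lam * R))
    (hslope : ∀ p ∈ ball pb R, 0 < infEDist ω (F p x) →
      infEDist ω (F p x) ≤ infEDist ω (F pb x) →
        ENNReal.ofReal lam < strongSlope (fun q => infEDist ω (F q x)) p) :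
    infEDist pb {p | ω ∈ F p x} ≤ infEDist ω (F pb x) / ENNReal.ofReal lam := by
  have hlam' : ENNReal.ofReal lam ≠ 0 := (ENNReal.ofReal_pos.2 hlam).ne'
  have hball : ∀ z, edist z pb ≤ infEDist ω (F pb x) / ENNReal.ofReal lam → z ∈ ball pb R := by
    intro z hz
    refine edist_lt_ofReal.1 (hz.trans_lt ?_)
    rwa [ENNReal.div_lt_iff (Or.inl hlam') (Or.inl ofReal_ne_top), ← ENNReal.ofReal_mul' hlam.le,
      mul_comm]
  have hR0 : 0 < R := pos_of_mul_pos_right (ENNReal.ofReal_pos.1 (zero_le.trans_lt hR)) hlam.le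
  obtain ⟨p, hp0, hp⟩ := exists_eq_zero_edist_le_of_lt_strongSlope isClosed_closedBall.isComplete
    (fun p hp => ((husc p hp).lowerSemicontinuousAt_infEDist ω).lowerSemicontinuousWithinAt _)
    (mem_closedBall_self hR0.le) hR.ne_top hlam' ofReal_ne_top
    (fun z hz => mem_of_superset (isOpen_ball.mem_nhds (hball z hz)) ball_subset_closedBall)
    (fun z hz => hslope z (hball z hz))
  have hp_mem : p ∈ {p | ω ∈ F p x} := (mem_iff_infEDist_zero_of_closed (hclosed p)).2 hp0
  rw [edist_comm] at hp
  exact (infEDist_le_edist_of_mem hp_mem).trans hp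

theorem infEDist_setOf_mem_le_ofReal_mul_infEDist {P X Y : Type*} [MetricSpace P]
    [CompleteSpace P] [MetricSpace X] [MetricSpace Y] {F : P → X → Set Y}
    (hclosed : ∀ p x, IsClosed (F p x)) {ω : Y} {pb : P} {xb : X} (hbar : ω ∈ F pb xb)
    {κ lam ρ δ : ℝ} (hκ : 0 ≤ κ) (hlam : 0 < lam)
    (husc : ∀ x ∈ closedBall xb ρ, ∀ p ∈ closedBall pb ρ,
      HausdorffUpperSemicontinuousAt (F · x) p)
    (hLl : ∀ x ∈ closedBall xb ρ,
      infEDist ω (F pb x) ≤ ENNReal.ofReal (κ * lam) * infEDist x {x' | ω ∈ F pb x'})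
    (hslope : ∀ p ∈ closedBall pb ρ, ∀ x ∈ closedBall xb ρ, 0 < infEDist ω (F p x) →
      infEDist ω (F p x) < ENNReal.ofReal ρ →
        ENNReal.ofReal lam < strongSlope (fun q => infEDist ω (F q x)) p)
    (hδ : (1 + κ) * (1 + lam) * δ < ρ) {x : X} (hx : x ∈ closedBall xb δ) :
    infEDist pb {p | ω ∈ F p x} ≤ ENNReal.ofReal κ * infEDist x {x' | ω ∈ F pb x'} := by
  have hδ0 : 0 ≤ δ := dist_nonneg.trans hx
  have hρ0 : 0 < ρ := lt_of_le_of_lt (by positivity) hδ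
  have hδρ : δ ≤ ρ ∧ κ * δ < ρ ∧ κ * lam * δ < ρ := by
    have : 0 ≤ κ * δ ∧ 0 ≤ lam * δ ∧ 0 ≤ κ * lam * δ :=
      ⟨by positivity, by positivity, by positivity⟩
    refine ⟨?_, ?_, ?_⟩ <;> nlinarith
  have hxρ : x ∈ closedBall xb ρ := closedBall_subset_closedBall hδρ.1 hx
  have hμ : infEDist x {x' | ω ∈ F pb x'} ≤ ENNReal.ofReal δ :=
    (infEDist_le_edist_of_mem (show xb ∈ {x' | ω ∈ F pb x'} from hbar)).trans
      ((edist_le_ofReal hδ0).2 hx)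
  have hνδ : infEDist ω (F pb x) ≤ ENNReal.ofReal (κ * lam * δ) := (hLl x hxρ).trans <| by
    rw [ENNReal.ofReal_mul (p := κ * lam) (by positivity)]
    gcongr
  have hνρ : infEDist ω (F pb x) < ENNReal.ofReal (lam * ρ) :=
    hνδ.trans_lt ((ENNReal.ofReal_lt_ofReal_iff (by positivity)).2 (by nlinarith))
  refine (infEDist_setOf_mem_le_div_of_lt_strongSlope (fun p => hclosed p x) hlam
    (husc x hxρ) hνρ fun p hp hp0 hpν => hslope p (ball_subset_closedBall hp) x hxρ hp0
      (hpν.trans_lt (hνδ.trans_lt ((ENNReal.ofReal_lt_ofReal_iff hρ0).2 hδρ.2.2)))).trans ?_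
  refine (ENNReal.div_le_div_right (hLl x hxρ) _).trans_eq ?_
  rw [ENNReal.ofReal_mul hκ, mul_right_comm,
    ENNReal.mul_div_cancel_right (ENNReal.ofReal_pos.2 hlam).ne' ofReal_ne_top]

/-- Theorem 4.1 (implicit multifunction theorem): under completeness of P,
Hausdorff upper semicontinuity of F(·,x), uniform Lipschitz lower semicontinuity
of F(pb,·) at (xb,ω) with modulus κ₀, and positivity α₀ of the strict outer slope
of the displacement, the solution mapping 𝓡(p) = {x : ω ∈ F(p,x)} is uniformly
hemiregular at (pb,xb) with modulus at most κ₀/α₀. -/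
theorem implicit_multifunction_uniform_hemiregularity
    {P X Y : Type*} [MetricSpace P] [CompleteSpace P] [MetricSpace X] [MetricSpace Y]
    (F : P → X → Set Y) (hclosed : ∀ p x, IsClosed (F p x))
    (ω : Y) (pb : P) (xb : X) (hbar : ω ∈ F pb xb)
    (husc : ∃ δ₀ : ℝ, 0 < δ₀ ∧ ∀ x ∈ Metric.closedBall xb δ₀,
        ∀ p ∈ Metric.closedBall pb δ₀, ∀ ε : ℝ, 0 < ε → ∃ δ : ℝ, 0 < δ ∧
          ∀ q ∈ Metric.closedBall p δ, ∀ y ∈ F q x,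
            EMetric.infEdist y (F p x) ≤ ENNReal.ofReal ε)
    (κ₀ : ℝ) (hκ₀ : 0 ≤ κ₀)
    (hLlsc : ∀ κ : ℝ, κ₀ < κ → ∃ r : ℝ, 0 < r ∧ ∀ x ∈ Metric.closedBall xb r,
        EMetric.infEdist ω (F pb x) ≤
          ENNReal.ofReal κ * EMetric.infEdist x {x' | ω ∈ F pb x'})
    (α₀ : ℝ) (hα₀ : 0 < α₀)
    (hslope : strictOuterSlope (fun p x => EMetric.infEdist ω (F p x)) pb xb =
        ENNReal.ofReal α₀) :
    ∀ κ' : ℝ, κ₀ / α₀ < κ' → ∃ δ : ℝ, 0 < δ ∧ ∀ x ∈ Metric.closedBall xb δ,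
      EMetric.infEdist pb {p | ω ∈ F p x} ≤
        ENNReal.ofReal κ' * EMetric.infEdist x {x' | ω ∈ F pb x'} := by
  intro κ' hκ'
  have hκ'0 : 0 < κ' := (div_nonneg hκ₀ hα₀.le).trans_lt hκ'
  obtain ⟨lam, hκ₀lam, hlamα₀⟩ : ∃ lam, κ₀ / κ' < lam ∧ lam < α₀ :=
    exists_between ((div_lt_iff₀' hκ'0).2 ((div_lt_iff₀ hα₀).1 hκ'))
  obtain ⟨r, hr, hLl⟩ := hLlsc (κ' * lam) ((div_lt_iff₀' hκ'0).1 hκ₀lam)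
  obtain ⟨δ₀, hδ₀, husc⟩ := husc
  obtain ⟨ε, hε, hslope⟩ := exists_pos_lt_strongSlope_of_lt_strictOuterSlope
    (hslope ▸ (ENNReal.ofReal_lt_ofReal_iff hα₀).2 hlamα₀)
  rw [show EMetric.infEdist ω (F pb xb) = 0 from infEDist_zero_of_mem hbar] at hslope
  set ρ := min r (min δ₀ ε)
  have hρ : ρ ≤ r ∧ ρ ≤ δ₀ ∧ ρ ≤ ε := ⟨min_le_left .., (min_le_right ..).trans (min_le_left ..),
    (min_le_right ..).trans (min_le_right ..)⟩
  obtain ⟨δ, hδ, hδρ⟩ := exists_pos_mul_lt (lt_min hr (lt_min hδ₀ hε)) ((1 + κ') * (1 + lam))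
  refine ⟨δ, hδ, fun x hx => infEDist_setOf_mem_le_ofReal_mul_infEDist hclosed hbar hκ'0.le
    ((div_nonneg hκ₀ hκ'0.le).trans_lt hκ₀lam)
    (fun x hx p hp => husc x (closedBall_subset_closedBall hρ.2.1 hx) p
      (closedBall_subset_closedBall hρ.2.1 hp))
    (fun x hx => hLl x (closedBall_subset_closedBall hρ.1 hx))
    (fun p hp x hx hp0 hpρ => hslope p (closedBall_subset_closedBall hρ.2.2 hp) x
      (closedBall_subset_closedBall hρ.2.2 hx) hp0
      (by rw [zero_add]; exact hpρ.trans_le (ENNReal.ofReal_le_ofReal hρ.2.2)))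
    hδρ hx⟩
end
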